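/- arXiv:1404.6089 — 3 statements merged into one kernel-verified Lean document; each statement's English description precedes it below -/
import Mathlib

section
/- For all α ≥ 2 and A > 0, the unit ball B = {(z,t) ∈ ℝ^{2d} × ℝ : |z|^α + A|t|^{α/2} ≤ 1} is a convex subset of ℝ^{2d+1}. -/
/-! Since `α ≥ 2`, both exponents `α` and `α / 2` are at least `1`, so `t ↦ t ^ α` and
`t ↦ t ^ (α / 2)` are convex and nondecreasing on `[0, ∞)`; composed with norms they stay convex.
The ball is then a sublevel set of a sum of convex functions. -/

open Set

theorem convexOn_norm_rpow {E : Type*} [SeminormedAddCommGroup E] [NormedSpace ℝ E] {p : ℝ}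
    (hp : 1 ≤ p) : ConvexOn ℝ univ fun x : E => ‖x‖ ^ p := by
  refine ⟨convex_univ, fun x _ y _ a b ha hb hab => ?_⟩
  have h_triangle : ‖a • x + b • y‖ ≤ a * ‖x‖ + b * ‖y‖ := by
    simpa only [norm_smul, Real.norm_of_nonneg ha, Real.norm_of_nonneg hb]
      using norm_add_le (a • x) (b • y)
  calc ‖a • x + b • y‖ ^ p ≤ (a * ‖x‖ + b * ‖y‖) ^ p :=
        Real.rpow_le_rpow (norm_nonneg _) h_triangle (by linarith)
    _ ≤ a * ‖x‖ ^ p + b * ‖y‖ ^ p :=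
        (convexOn_rpow hp).2 (norm_nonneg x) (norm_nonneg y) ha hb hab

theorem convex_setOf_norm_rpow_add_mul_norm_rpow_le {E F : Type*}
    [SeminormedAddCommGroup E] [NormedSpace ℝ E] [SeminormedAddCommGroup F] [NormedSpace ℝ F]
    {p q c : ℝ} (hp : 1 ≤ p) (hq : 1 ≤ q) (hc : 0 ≤ c) (r : ℝ) :
    Convex ℝ {z : E × F | ‖z.1‖ ^ p + c * ‖z.2‖ ^ q ≤ r} := by
  have h_fst : ConvexOn ℝ univ fun z : E × F => ‖z.1‖ ^ p :=
    (convexOn_norm_rpow hp).comp_linearMap (LinearMap.fst ℝ E F)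
  have h_snd : ConvexOn ℝ univ fun z : E × F => c * ‖z.2‖ ^ q :=
    ((convexOn_norm_rpow hq).comp_linearMap (LinearMap.snd ℝ E F)).smul hc
  simpa only [mem_univ, true_and, Pi.add_apply] using (h_fst.add h_snd).convex_le r

theorem stmt0 (d : ℕ) (α A : ℝ) (hα : 2 ≤ α) (hA : 0 < A) :
    Convex ℝ {p : EuclideanSpace ℝ (Fin (2*d)) × ℝ |
      ‖p.1‖ ^ α + A * |p.2| ^ (α/2) ≤ 1} := by
  simpa only [Real.norm_eq_abs] using
    convex_setOf_norm_rpow_add_mul_norm_rpow_le (E := EuclideanSpace ℝ (Fin (2*d))) (F := ℝ)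
      (by linarith : 1 ≤ α) (by linarith : 1 ≤ α / 2) hA.le 1
end

section
/- For every 0 < λ ≤ 1 there is a constant C_λ such that for all real s ≠ 0 and all −∞ < a < b < ∞, |∫_a^b e^{−ist} (t−a)^{λ−1} dt| ≤ C_λ |s|^{−λ}, with C_λ independent of a and b. -/
/-!
After translating `a` to `0` (the phase factor `e^{-isa}` has modulus one), split `∫_0^T` at
`ε = 1/|s|`. On `[0, ε]` the trivial bound gives `ε^λ / λ`. On `[ε, T]` the amplitude `t^{λ-1}` is
nonnegative and nonincreasing, so one integration by parts against `e^{-ist} / (-is)` bounds the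
integral by `2 ε^{λ-1} / |s| = 2 ε^λ`. Hence `C_λ = 1/λ + 2`.
-/

open MeasureTheory intervalIntegral Set
open scoped Interval

theorem norm_exp_neg_I_mul_ofReal_mul_ofReal (s t : ℝ) :
    ‖Complex.exp (-(Complex.I * s * t))‖ = 1 := by
  rw [Complex.norm_exp]
  simp

theorem IntervalIntegrable.ofReal {μ : Measure ℝ} {f : ℝ → ℝ} {a b : ℝ}
    (hf : IntervalIntegrable f μ a b) : IntervalIntegrable (fun x => (f x : ℂ)) μ a b :=
  ⟨hf.1.ofReal, hf.2.ofReal⟩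

theorem intervalIntegrable_exp_mul_rpow {lam : ℝ} (h0 : 0 < lam) (s a b : ℝ) :
    IntervalIntegrable
      (fun t : ℝ => Complex.exp (-(Complex.I * s * t)) * ((t ^ (lam - 1) : ℝ) : ℂ)) volume a b :=
  (intervalIntegrable_rpow' (by linarith)).ofReal.continuousOn_mul (by fun_prop)

theorem norm_integral_exp_mul_comp_sub (s a b : ℝ) (g : ℝ → ℂ) :
    ‖∫ t in a..b, Complex.exp (-(Complex.I * s * t)) * g (t - a)‖ =
      ‖∫ t in (0 : ℝ)..(b - a), Complex.exp (-(Complex.I * s * t)) * g t‖ := by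
  have hshift : (∫ t in a..b, Complex.exp (-(Complex.I * s * t)) * g (t - a)) =
      Complex.exp (-(Complex.I * s * a)) *
        ∫ t in (0 : ℝ)..(b - a), Complex.exp (-(Complex.I * s * t)) * g t := by
    rw [← intervalIntegral.integral_const_mul, ← sub_self a,
      ← integral_comp_sub_right (fun t => Complex.exp (-(Complex.I * s * a)) *
        (Complex.exp (-(Complex.I * s * t)) * g t))]
    refine integral_congr fun t _ => ?_
    simp only [← mul_assoc, ← Complex.exp_add]
    congr 3
    push_cast
    ring
  rw [hshift, norm_mul, norm_exp_neg_I_mul_ofReal_mul_ofReal, one_mul]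

theorem norm_integral_exp_mul_rpow_le {lam : ℝ} (h0 : 0 < lam) (s : ℝ) {p : ℝ} (hp : 0 ≤ p) :
    ‖∫ t in (0 : ℝ)..p, Complex.exp (-(Complex.I * s * t)) * ((t ^ (lam - 1) : ℝ) : ℂ)‖ ≤
      p ^ lam / lam := by
  calc _ ≤ ∫ t in (0 : ℝ)..p, t ^ (lam - 1) := by
        refine norm_integral_le_of_norm_le hp (ae_of_all _ fun t ht => ?_)
          (intervalIntegrable_rpow' (by linarith))
        rw [norm_mul, norm_exp_neg_I_mul_ofReal_mul_ofReal, one_mul, Complex.norm_real,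
          Real.norm_of_nonneg (Real.rpow_nonneg ht.1.le _)]
    _ = p ^ lam / lam := by
        rw [integral_rpow (Or.inl (by linarith)), sub_add_cancel, Real.zero_rpow h0.ne', sub_zero]

theorem hasDerivAt_exp_neg_I_mul_div {s : ℝ} (hs : s ≠ 0) (t : ℝ) :
    HasDerivAt (fun t : ℝ => Complex.exp (-(Complex.I * s * t)) / -(Complex.I * s))
      (Complex.exp (-(Complex.I * s * t))) t := by
  set c : ℂ := -(Complex.I * s)
  have hc : c ≠ 0 := by simp [c, hs]
  have := (((hasDerivAt_id (t : ℂ)).const_mul c).cexp.div_const c).comp_ofReal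
  simp only [id, mul_one, mul_div_cancel_right₀ _ hc] at this
  convert this using 3 <;> simp [c]

theorem norm_exp_neg_I_mul_div (s t : ℝ) :
    ‖Complex.exp (-(Complex.I * s * t)) / -(Complex.I * s)‖ = |s|⁻¹ := by
  simp [norm_exp_neg_I_mul_ofReal_mul_ofReal]

theorem norm_integral_exp_mul_le_of_deriv_nonpos {s a b : ℝ} (hs : s ≠ 0) (hab : a ≤ b)
    {g g' : ℝ → ℝ} (hg : ∀ x ∈ [[a, b]], HasDerivAt g (g' x) x)
    (hg'_nonpos : ∀ x ∈ [[a, b]], g' x ≤ 0) (hg' : IntervalIntegrable g' volume a b)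
    (hgb : 0 ≤ g b) :
    ‖∫ t in a..b, Complex.exp (-(Complex.I * s * t)) * (g t : ℂ)‖ ≤ 2 * g a / |s| := by
  set v : ℝ → ℂ := fun t => Complex.exp (-(Complex.I * s * t)) / -(Complex.I * s)
  have hv_norm : ∀ t, ‖v t‖ = |s|⁻¹ := norm_exp_neg_I_mul_div s
  have hibp := intervalIntegral.integral_mul_deriv_eq_deriv_mul
    (fun x hx => (hg x hx).ofReal_comp) (fun t _ => hasDerivAt_exp_neg_I_mul_div hs t) hg'.ofReal
    ((by fun_prop : Continuous fun t : ℝ => Complex.exp (-(Complex.I * s * t))).intervalIntegrable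
      a b)
  have hftc : ∫ t in a..b, -g' t = g a - g b := by
    rw [intervalIntegral.integral_neg, integral_eq_sub_of_hasDerivAt hg hg']
    ring
  have hga : 0 ≤ g a := by
    have : 0 ≤ ∫ t in a..b, -g' t :=
      integral_nonneg hab fun t ht => neg_nonneg.2 (hg'_nonpos t (by rwa [uIcc_of_le hab]))
    linarith
  have hrem : ‖∫ t in a..b, (g' t : ℂ) * v t‖ ≤ (g a - g b) / |s| := by
    calc _ ≤ ∫ t in a..b, -g' t / |s| := by
          refine norm_integral_le_of_norm_le hab (ae_of_all _ fun t ht => ?_) (hg'.neg.div_const _)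
          rw [norm_mul, hv_norm, Complex.norm_real, Real.norm_of_nonpos
            (hg'_nonpos t (Ioc_subset_Icc_self.trans Icc_subset_uIcc ht)), div_eq_mul_inv]
      _ = (g a - g b) / |s| := by rw [intervalIntegral.integral_div, hftc]
  calc _ = ‖(g b : ℂ) * v b - (g a : ℂ) * v a - ∫ t in a..b, (g' t : ℂ) * v t‖ := by
        rw [← hibp]
        simp_rw [mul_comm (Complex.exp _)]
    _ ≤ g b / |s| + g a / |s| + (g a - g b) / |s| := by
        refine (norm_sub_le _ _).trans (add_le_add ((norm_sub_le _ _).trans_eq ?_) hrem)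
        simp only [norm_mul, hv_norm, Complex.norm_real, Real.norm_of_nonneg hga,
          Real.norm_of_nonneg hgb, div_eq_mul_inv]
    _ = 2 * g a / |s| := by ring

theorem norm_integral_exp_mul_rpow_le_mul_abs_rpow_neg {lam : ℝ} (h0 : 0 < lam) (h1 : lam ≤ 1)
    {s : ℝ} (hs : s ≠ 0) {T : ℝ} (hT : 0 ≤ T) :
    ‖∫ t in (0 : ℝ)..T, Complex.exp (-(Complex.I * s * t)) * ((t ^ (lam - 1) : ℝ) : ℂ)‖ ≤
      (1 / lam + 2) * |s| ^ (-lam) := by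
  set ε := |s|⁻¹
  have hε0 : 0 < ε := by positivity
  have hpow : |s| ^ (-lam) = ε ^ lam := by
    rw [Real.rpow_neg (abs_nonneg s), Real.inv_rpow (abs_nonneg s)]
  rw [hpow]
  rcases le_or_gt T ε with hTε | hεT
  · calc _ ≤ T ^ lam / lam := norm_integral_exp_mul_rpow_le h0 s hT
      _ ≤ ε ^ lam / lam := by gcongr
      _ ≤ (1 / lam + 2) * ε ^ lam := by
        rw [add_mul, one_div_mul_eq_div]
        linarith [Real.rpow_nonneg hε0.le lam]
  have hpos : ∀ t ∈ [[ε, T]], 0 < t := fun t ht => hε0.trans_le (uIcc_of_le hεT.le ▸ ht).1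
  have hfar : ‖∫ t in ε..T, Complex.exp (-(Complex.I * s * t)) * ((t ^ (lam - 1) : ℝ) : ℂ)‖ ≤
      2 * ε ^ lam := by
    refine (norm_integral_exp_mul_le_of_deriv_nonpos hs hεT.le
      (fun t ht => Real.hasDerivAt_rpow_const (Or.inl (hpos t ht).ne'))
      (fun t ht => mul_nonpos_of_nonpos_of_nonneg (by linarith)
        (Real.rpow_nonneg (hpos t ht).le _))
      (ContinuousOn.intervalIntegrable ?_) (Real.rpow_nonneg (by linarith) _)).trans_eq ?_
    · exact continuousOn_const.mul
        (continuousOn_id.rpow_const fun t ht => Or.inl (hpos t ht).ne')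
    · rw [Real.rpow_sub_one hε0.ne']
      field_simp
      exact (inv_mul_cancel₀ (abs_ne_zero.2 hs)).symm
  rw [← integral_add_adjacent_intervals (intervalIntegrable_exp_mul_rpow h0 s 0 ε)
    (intervalIntegrable_exp_mul_rpow h0 s ε T)]
  calc _ ≤ _ := norm_add_le _ _
    _ ≤ ε ^ lam / lam + 2 * ε ^ lam :=
        add_le_add (norm_integral_exp_mul_rpow_le h0 s hε0.le) hfar
    _ = (1 / lam + 2) * ε ^ lam := by ring

theorem stmt10 (lam : ℝ) (h0 : 0 < lam) (h1 : lam ≤ 1) :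
    ∃ C > 0, ∀ (s a b : ℝ), s ≠ 0 → a < b →
      ‖∫ t in a..b, Complex.exp (-(Complex.I * s * t)) * (((t - a) ^ (lam - 1) : ℝ) : ℂ)‖ ≤
        C * |s| ^ (-lam) := by
  refine ⟨1 / lam + 2, by positivity, fun s a b hs hab => ?_⟩
  rw [norm_integral_exp_mul_comp_sub s a b (fun t => ((t ^ (lam - 1) : ℝ) : ℂ))]
  exact norm_integral_exp_mul_rpow_le_mul_abs_rpow_neg h0 h1 hs (by linarith)
end

section
/- Let α > 2 and define the phase φ(r) = r + (s/w)(1−r^α)^{2/α} on [0,1) with w, s > 0. Let r₀ ∈ (0,1) be the unique point with r₀^{α−1}(1−r₀^α)^{2/α−1} = w/(4s). Then |φ′(r)| ≥ 1/2 for r ∈ [0, r₀] and |φ″(r)| ≥ 1/2 for r ∈ [r₀, 1). -/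
lemma gmono13 (α : ℝ) (hα : 2 < α) {a b : ℝ} (ha : 0 ≤ a) (hab : a ≤ b) (hb : b < 1) :
    a ^ (α - 1) * (1 - a ^ α) ^ (2/α - 1) ≤ b ^ (α - 1) * (1 - b ^ α) ^ (2/α - 1) := by
  have hb0 : (0:ℝ) ≤ b := ha.trans hab
  have hαpos : (0:ℝ) < α := by linarith
  have htb : b ^ α < 1 := Real.rpow_lt_one hb0 hb hαpos
  have hta : a ^ α ≤ b ^ α := Real.rpow_le_rpow ha hab hαpos.le
  have h1b : 0 < 1 - b ^ α := by linarith
  have he : 2/α - 1 ≤ 0 := by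
    have : 2/α < 1 := by rw [div_lt_one hαpos]; linarith
    linarith
  have h2 : (1 - a ^ α) ^ (2/α - 1) ≤ (1 - b ^ α) ^ (2/α - 1) :=
    Real.rpow_le_rpow_of_nonpos h1b (by linarith) he
  exact mul_le_mul (Real.rpow_le_rpow ha hab (by linarith)) h2
    (Real.rpow_nonneg (by linarith) _) (Real.rpow_nonneg hb0 _)

theorem stmt13 (α w s r₀ : ℝ) (hα : 2 < α) (hw : 0 < w) (hs : 0 < s)
    (hr₀ : r₀ ∈ Set.Ioo (0:ℝ) 1)
    (h : r₀ ^ (α - 1) * (1 - r₀ ^ α) ^ (2/α - 1) = w / (4 * s)) :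
    (∀ r ∈ Set.Icc (0:ℝ) r₀,
        (1:ℝ)/2 ≤ |1 - (2 * s / w) * r ^ (α - 1) * (1 - r ^ α) ^ (2/α - 1)|) ∧
    (∀ r ∈ Set.Ico r₀ (1:ℝ),
        (1:ℝ)/2 ≤
          |-((2 * s / w) * r ^ (α - 2) * (1 - r ^ α) ^ (2/α - 2) * ((α - 1) - r ^ α))|) := by
  obtain ⟨hr₀0, hr₀1⟩ := hr₀
  have hsw : 0 < 2 * s / w := by positivity
  constructor
  · intro r ⟨hr0, hrr₀⟩
    have hg : r ^ (α - 1) * (1 - r ^ α) ^ (2/α - 1) ≤ w / (4 * s) := by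
      rw [← h]; exact gmono13 α hα hr0 hrr₀ hr₀1
    have hg0 : 0 ≤ r ^ (α - 1) * (1 - r ^ α) ^ (2/α - 1) := by
      have hr1 : r < 1 := lt_of_le_of_lt hrr₀ hr₀1
      have : r ^ α < 1 := Real.rpow_lt_one hr0 hr1 (by linarith)
      have := Real.rpow_nonneg hr0 (α - 1)
      have := Real.rpow_nonneg (by linarith : (0:ℝ) ≤ 1 - r ^ α) (2/α - 1)
      positivity
    have key : (2 * s / w) * r ^ (α - 1) * (1 - r ^ α) ^ (2/α - 1) ≤ 1/2 := by
      have := mul_le_mul_of_nonneg_left hg hsw.le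
      have heq : 2 * s / w * (w / (4 * s)) = 1/2 := by field_simp; ring
      calc (2 * s / w) * r ^ (α - 1) * (1 - r ^ α) ^ (2/α - 1)
          = 2 * s / w * (r ^ (α - 1) * (1 - r ^ α) ^ (2/α - 1)) := by ring
        _ ≤ 2 * s / w * (w / (4 * s)) := this
        _ = 1/2 := heq
    have key0 : 0 ≤ (2 * s / w) * r ^ (α - 1) * (1 - r ^ α) ^ (2/α - 1) := by
      rw [mul_assoc]; positivity
    rw [abs_of_nonneg (by linarith)]; linarith
  · intro r ⟨hr₀r, hr1⟩
    have hr0 : 0 < r := lt_of_lt_of_le hr₀0 hr₀r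
    have hαpos : (0:ℝ) < α := by linarith
    have ht1 : r ^ α < 1 := Real.rpow_lt_one hr0.le hr1 hαpos
    have ht0 : 0 < r ^ α := Real.rpow_pos_of_pos hr0 α
    have h1t : 0 < 1 - r ^ α := by linarith
    have hA : 0 < r ^ (α - 2) := Real.rpow_pos_of_pos hr0 _
    have hB : 0 < (1 - r ^ α) ^ (2/α - 2) := Real.rpow_pos_of_pos h1t _
    have hC : 0 < (α - 1) - r ^ α := by nlinarith
    -- g(r) ≥ w/(4s)
    have hg : w / (4 * s) ≤ r ^ (α - 1) * (1 - r ^ α) ^ (2/α - 1) := by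
      rw [← h]; exact gmono13 α hα hr₀0.le hr₀r hr1
    -- rewrite g(r) in terms of A, B
    have hArw : r ^ (α - 1) = r ^ (α - 2) * r := by
      rw [show α - 1 = (α - 2) + 1 by ring, Real.rpow_add hr0, Real.rpow_one]
    have hBrw : (1 - r ^ α) ^ (2/α - 1) = (1 - r ^ α) ^ (2/α - 2) * (1 - r ^ α) := by
      rw [show 2/α - 1 = (2/α - 2) + 1 by ring, Real.rpow_add h1t, Real.rpow_one]
    have hCge : r * (1 - r ^ α) ≤ (α - 1) - r ^ α := by nlinarith
    have step : r ^ (α - 1) * (1 - r ^ α) ^ (2/α - 1)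
        ≤ r ^ (α - 2) * (1 - r ^ α) ^ (2/α - 2) * ((α - 1) - r ^ α) := by
      rw [hArw, hBrw]
      calc r ^ (α - 2) * r * ((1 - r ^ α) ^ (2/α - 2) * (1 - r ^ α))
          = r ^ (α - 2) * (1 - r ^ α) ^ (2/α - 2) * (r * (1 - r ^ α)) := by ring
        _ ≤ r ^ (α - 2) * (1 - r ^ α) ^ (2/α - 2) * ((α - 1) - r ^ α) := by
            exact mul_le_mul_of_nonneg_left hCge (by positivity)
    have key : 1/2 ≤ (2 * s / w) * r ^ (α - 2) * (1 - r ^ α) ^ (2/α - 2) * ((α - 1) - r ^ α) := by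
      have h1 : w / (4 * s) ≤ r ^ (α - 2) * (1 - r ^ α) ^ (2/α - 2) * ((α - 1) - r ^ α) :=
        hg.trans step
      have := mul_le_mul_of_nonneg_left h1 hsw.le
      have heq : 2 * s / w * (w / (4 * s)) = 1/2 := by field_simp; ring
      calc (1:ℝ)/2 = 2 * s / w * (w / (4 * s)) := heq.symm
        _ ≤ 2 * s / w * (r ^ (α - 2) * (1 - r ^ α) ^ (2/α - 2) * ((α - 1) - r ^ α)) := this
        _ = (2 * s / w) * r ^ (α - 2) * (1 - r ^ α) ^ (2/α - 2) * ((α - 1) - r ^ α) := by ring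
    rw [abs_neg, abs_of_nonneg (by positivity)]
    exact key
end
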